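/- arXiv:1308.1177 — 2 statements merged into one kernel-verified Lean document; each statement's English description precedes it below -/
import Mathlib

section
/- Let (X, ν) be a measure space and let Φ : ℝ × X → X be jointly measurable with each Φ_s := Φ(s,·) measure-preserving and Φ_{−s} ∘ Φ_s = id ν-a.e. for every s. Let R : X → X be measure-preserving with R ∘ R = id and Φ_{−s} = R ∘ Φ_s ∘ R ν-a.e. for every s. For λ > 0 and g ∈ L²(ν; ℝ) set (Q_λ g)(x) = ∫_{−∞}^0 λ e^{λ s} g(Φ_s x) ds. Then for all g, h ∈ L²(ν; ℝ): ∫_X h(x) (Q_λ g)(x) dν(x) = ∫_X g(Rx) · Q_λ(h ∘ R)(x) dν(x). -/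
/-!
For a fixed time `s`, substituting `x = Φ_{-s} y`, then `Φ_{-s} = R ∘ Φ_s ∘ R` and `y = R z`
turns `∫ h · (g ∘ Φ_s)` into `∫ (g ∘ R) · (h ∘ R ∘ Φ_s)`. Integrating this against the
weight `λ e^{λ s}` on `(-∞, 0]` gives the identity once the `s`- and `x`-integrals are swapped;
Fubini applies because, by Cauchy–Schwarz and invariance of `ν`, `‖h · (g ∘ Φ_s)‖₁ ≤ ‖h‖₂ ‖g‖₂`
uniformly in `s` while the weight is integrable.
-/

open MeasureTheory Set
open scoped ENNReal

namespace ReversibleFlow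

variable {X : Type*} [MeasurableSpace X] {ν : Measure X}

lemma lintegral_enorm_mul_comp_le {Y : Type*} [MeasurableSpace Y] {μ : Measure Y}
    {p q : ℝ≥0∞} [ENNReal.HolderConjugate p q] {f : X → Y} (hf : MeasurePreserving f ν μ)
    {a : X → ℝ} {b : Y → ℝ} (ha : AEStronglyMeasurable a ν) (hb : AEStronglyMeasurable b μ) :
    ∫⁻ x, ‖a x * b (f x)‖ₑ ∂ν ≤ eLpNorm a p ν * eLpNorm b q μ := by
  rw [← eLpNorm_one_eq_lintegral_enorm, ← eLpNorm_comp_measurePreserving hb hf]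
  simpa using eLpNorm_le_eLpNorm_mul_eLpNorm_of_nnnorm ha (hb.comp_measurePreserving hf)
    (· * ·) 1 (.of_forall fun x => by simp)

variable {T : Type*} [MeasurableSpace T] {μ : Measure T} [SFinite μ] {Ψ : T → X → X}

lemma quasiMeasurePreserving_uncurry_prod {ν' : Measure X} [SFinite ν']
    (hΨ : Measurable fun p : T × X => Ψ p.1 p.2)
    (hΨν : ∀ s, Measure.QuasiMeasurePreserving (Ψ s) ν ν) (hν' : ν' ≪ ν) :
    Measure.QuasiMeasurePreserving (fun z : X × T => Ψ z.2 z.1) (ν'.prod μ) ν := by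
  have hm : Measurable fun z : X × T => Ψ z.2 z.1 := hΨ.comp measurable_swap
  refine ⟨hm, .mk fun N hN hνN => ?_⟩
  rw [Measure.map_apply hm hN, Measure.prod_apply_symm (hm hN)]
  have hslice : ∀ s, ν' (Ψ s ⁻¹' N) = 0 := fun s => hν' ((hΨν s).preimage_null hνN)
  exact (lintegral_congr fun s => hslice s).trans lintegral_zero

lemma integrable_mul_comp_uncurry_prod {ν' : Measure X} [SFinite ν'] (hν' : ν' ≤ ν)
    (hΨ : Measurable fun p : T × X => Ψ p.1 p.2)
    (hΨν : ∀ s, MeasurePreserving (Ψ s) ν ν) {w : T → ℝ} (hw : Integrable w μ)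
    {p q : ℝ≥0∞} [ENNReal.HolderConjugate p q]
    {a b : X → ℝ} (ha : MemLp a p ν) (hb : MemLp b q ν) :
    Integrable (fun z : X × T => a z.1 * (w z.2 * b (Ψ z.2 z.1))) (ν'.prod μ) := by
  have hΨν' := quasiMeasurePreserving_uncurry_prod (μ := μ) hΨ
    (fun s => (hΨν s).quasiMeasurePreserving) (Measure.absolutelyContinuous_of_le hν')
  have hmeas : AEStronglyMeasurable (fun z : X × T => a z.1 * (w z.2 * b (Ψ z.2 z.1)))
      (ν'.prod μ) :=
    (ha.1.mono_ac (Measure.absolutelyContinuous_of_le hν')).comp_fst.mul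
      (hw.1.comp_snd.mul (hb.1.comp_quasiMeasurePreserving hΨν') :)
  refine ⟨hmeas, ?_⟩
  have hC : eLpNorm a p ν * eLpNorm b q ν < ∞ := ENNReal.mul_lt_top ha.2 hb.2
  calc ∫⁻ z, ‖a z.1 * (w z.2 * b (Ψ z.2 z.1))‖ₑ ∂(ν'.prod μ)
      = ∫⁻ s, ∫⁻ x, ‖w s‖ₑ * ‖a x * b (Ψ s x)‖ₑ ∂ν' ∂μ := by
        rw [lintegral_prod_symm _ hmeas.enorm]
        simp only [mul_left_comm (a _), enorm_mul (w _)]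
    _ ≤ ∫⁻ s, ‖w s‖ₑ * (eLpNorm a p ν * eLpNorm b q ν) ∂μ := by
        refine lintegral_mono fun s => ?_
        rw [lintegral_const_mul' _ _ enorm_ne_top]
        gcongr
        exact (lintegral_mono' hν' le_rfl).trans
          (lintegral_enorm_mul_comp_le (hΨν s) ha.1 hb.1)
    _ < ∞ := by
        rw [lintegral_mul_const' _ _ hC.ne]
        exact ENNReal.mul_lt_top hw.2 hC

/-- `ν` need not be s-finite: the integrals are swapped on a σ-finite set outside which `a`
vanishes. -/
theorem integral_mul_integral_comp_comm (hΨ : Measurable fun p : T × X => Ψ p.1 p.2)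
    (hΨν : ∀ s, MeasurePreserving (Ψ s) ν ν) {w : T → ℝ} (hw : Integrable w μ)
    {p q : ℝ≥0∞} [ENNReal.HolderConjugate p q] (hp : p ≠ ∞)
    {a b : X → ℝ} (ha : MemLp a p ν) (hb : MemLp b q ν) :
    ∫ x, a x * ∫ s, w s * b (Ψ s x) ∂μ ∂ν = ∫ s, w s * ∫ x, a x * b (Ψ s x) ∂ν ∂μ := by
  have ha_fin := ha.aefinStronglyMeasurable (ENNReal.HolderConjugate.ne_zero p q) hp
  set t := ha_fin.sigmaFiniteSet
  have ha_zero : ∀ᵐ x ∂ν, x ∉ t → a x = 0 := ae_imp_of_ae_restrict ha_fin.ae_eq_zero_compl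
  have hswap := integral_integral_swap (f := fun x s => a x * (w s * b (Ψ s x)))
    (integrable_mul_comp_uncurry_prod (Measure.restrict_le_self (s := t)) hΨ hΨν hw ha hb)
  calc ∫ x, a x * ∫ s, w s * b (Ψ s x) ∂μ ∂ν
      = ∫ x in t, ∫ s, a x * (w s * b (Ψ s x)) ∂μ ∂ν := by
        rw [← setIntegral_eq_integral_of_ae_compl_eq_zero (s := t)]
        · simp only [integral_const_mul]
        filter_upwards [ha_zero] with x hx hxt
        rw [hx hxt, zero_mul]
    _ = ∫ s, w s * ∫ x in t, a x * b (Ψ s x) ∂ν ∂μ := by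
        rw [hswap]
        simp only [mul_left_comm (a _), integral_const_mul]
    _ = ∫ s, w s * ∫ x, a x * b (Ψ s x) ∂ν ∂μ := by
        congr! 3 with s
        refine setIntegral_eq_integral_of_ae_compl_eq_zero ?_
        filter_upwards [ha_zero] with x hx hxt
        rw [hx hxt, zero_mul]

theorem integral_mul_comp_eq_of_conj_involutive {φ ψ R : X → X}
    (hφ : Measure.QuasiMeasurePreserving φ ν ν) (hψ : MeasurePreserving ψ ν ν)
    (hφψ : ∀ᵐ x ∂ν, φ (ψ x) = x) (hR : MeasurePreserving R ν ν) (hRR : Function.Involutive R)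
    (hψR : ∀ᵐ x ∂ν, ψ x = R (φ (R x))) {g h : X → ℝ} (hg : AEStronglyMeasurable g ν)
    (hh : AEStronglyMeasurable h ν) :
    ∫ x, h x * g (φ x) ∂ν = ∫ x, g (R x) * h (R (φ x)) ∂ν := by
  have hF : AEStronglyMeasurable (fun x => h x * g (φ x)) (ν.map ψ) :=
    hψ.map_eq.symm ▸ hh.mul (hg.comp_quasiMeasurePreserving hφ)
  have hR' : MeasurePreserving (MeasurableEquiv.ofInvolutive R hRR hR.measurable) ν ν := hR
  calc ∫ x, h x * g (φ x) ∂ν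
      = ∫ y, h (ψ y) * g (φ (ψ y)) ∂ν := by rw [← integral_map hψ.aemeasurable hF, hψ.map_eq]
    _ = ∫ y, h (R (φ (R y))) * g (R (R y)) ∂ν := by
        refine integral_congr_ae ?_
        filter_upwards [hφψ, hψR] with y hy hy'
        rw [hy, hy', hRR]
    _ = ∫ x, g (R x) * h (R (φ x)) ∂ν :=
        (hR'.integral_comp' fun z => h (R (φ z)) * g (R z)).trans
          (integral_congr_ae (.of_forall fun _ => mul_comm _ _))

end ReversibleFlow

open ReversibleFlow

/-- Abstract adjoint identity (4.11): if the flow `Φ` is reversed by the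
measure-preserving involution `R` (i.e. `Φ_{−s} = R ∘ Φ_s ∘ R` a.e.), then
`∫ h · Q_λ g dν = ∫ g(Rx) · Q_λ(h∘R)(x) dν` for all `g, h ∈ L²(ν)`. -/
theorem stmt11 {X : Type*} [MeasurableSpace X] (ν : Measure X)
    (Φ : ℝ → X → X) (hΦ : Measurable fun p : ℝ × X => Φ p.1 p.2)
    (hmp : ∀ s : ℝ, MeasurePreserving (Φ s) ν ν)
    (hinv : ∀ s : ℝ, ∀ᵐ x ∂ν, Φ (-s) (Φ s x) = x)
    (R : X → X) (hRmp : MeasurePreserving R ν ν) (hRR : ∀ x, R (R x) = x)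
    (hrev : ∀ s : ℝ, ∀ᵐ x ∂ν, Φ (-s) x = R (Φ s (R x)))
    (lam : ℝ) (hlam : 0 < lam)
    (g h : X → ℝ) (hg : MemLp g 2 ν) (hh : MemLp h 2 ν) :
    ∫ x, h x * (∫ s in Iic (0 : ℝ), lam * Real.exp (lam * s) * g (Φ s x)) ∂ν =
      ∫ x, g (R x) * (∫ s in Iic (0 : ℝ), lam * Real.exp (lam * s) * h (R (Φ s x))) ∂ν := by
  have hw : IntegrableOn (fun s => lam * Real.exp (lam * s)) (Iic 0) :=
    (integrableOn_exp_mul_Iic hlam 0).const_mul lam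
  have hfixed : ∀ s, ∫ x, h x * g (Φ s x) ∂ν = ∫ x, g (R x) * h (R (Φ s x)) ∂ν := fun s =>
    integral_mul_comp_eq_of_conj_involutive (hmp s).quasiMeasurePreserving (hmp (-s))
      (by simpa using hinv (-s)) hRmp hRR (hrev s) hg.1 hh.1
  calc _ = ∫ s in Iic 0, lam * Real.exp (lam * s) * ∫ x, h x * g (Φ s x) ∂ν :=
        integral_mul_integral_comp_comm hΦ hmp hw ENNReal.ofNat_ne_top hh hg
    _ = ∫ s in Iic 0, lam * Real.exp (lam * s) * ∫ x, g (R x) * h (R (Φ s x)) ∂ν := by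
        simp only [hfixed]
    _ = _ := (integral_mul_integral_comp_comm (Ψ := fun s x => R (Φ s x))
        (hRmp.measurable.comp hΦ) (fun s => hRmp.comp (hmp s)) hw ENNReal.ofNat_ne_top
        (hg.comp_measurePreserving hRmp) hh).symm
end

section
/- Let (X, 𝒜, σ) be a finite measure space, Ψ : X → X a measurable measure-preserving map, and α : X → [0, ∞] measurable. Then for every ε > 0, the set Z_ε = { x ∈ X : ε < Σ_{k=0}^∞ α(Ψ^k x) < ∞ } has σ-measure zero. Consequently the set { x ∈ X : 0 < Σ_{k=0}^∞ α(Ψ^k x) < ∞ } has σ-measure zero. -/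
open MeasureTheory Filter Function Topology
open scoped ENNReal

/-!
A point `x` with `ε < ∑ₖ α (Ψ^[k] x) < ∞` has orbit tails `∑ₖ α (Ψ^[k+n] x) = ∑ₖ α (Ψ^[k] (Ψ^[n] x))`
tending to `0`, so its orbit eventually leaves the set `Z_ε` of such points. A measure-preserving map
of a finite measure space is conservative, so by Poincaré recurrence almost every point of `Z_ε`
returns to `Z_ε` infinitely often; hence `Z_ε` is null. The set where `0 < ∑ₖ α (Ψ^[k] x) < ∞` is the
countable union of the `Z_{1/n}`.
-/

section OrbitSum

variable {X : Type*}

noncomputable def orbitSum (f : X → X) (α : X → ℝ≥0∞) (x : X) : ℝ≥0∞ :=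
  ∑' k : ℕ, α (f^[k] x)

theorem measurable_orbitSum [MeasurableSpace X] {f : X → X} {α : X → ℝ≥0∞}
    (hf : Measurable f) (hα : Measurable α) : Measurable (orbitSum f α) :=
  Measurable.tsum fun k => hα.comp (hf.iterate k)

theorem orbitSum_iterate (f : X → X) (α : X → ℝ≥0∞) (n : ℕ) (x : X) :
    orbitSum f α (f^[n] x) = ∑' k : ℕ, α (f^[k + n] x) := by
  simp only [orbitSum, iterate_add_apply]

theorem tendsto_orbitSum_iterate_zero {f : X → X} {α : X → ℝ≥0∞} {x : X}
    (hx : orbitSum f α x ≠ ⊤) : Tendsto (fun n => orbitSum f α (f^[n] x)) atTop (𝓝 0) := by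
  simp only [orbitSum_iterate]
  exact ENNReal.tendsto_sum_nat_add (fun k => α (f^[k] x)) hx

theorem MeasureTheory.Conservative.measure_orbitSum_gt_lt_top_eq_zero [MeasurableSpace X]
    {μ : Measure X} {f : X → X} (hf : Conservative f μ) (hfm : Measurable f)
    {α : X → ℝ≥0∞} (hα : Measurable α) {ε : ℝ≥0∞} (hε : 0 < ε) :
    μ {x | ε < orbitSum f α x ∧ orbitSum f α x < ⊤} = 0 := by
  set Z := {x | ε < orbitSum f α x ∧ orbitSum f α x < ⊤}
  have hZ : MeasurableSet Z :=
    (measurableSet_lt measurable_const (measurable_orbitSum hfm hα)).inter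
      (measurableSet_lt (measurable_orbitSum hfm hα) measurable_const)
  by_contra hZ_pos
  obtain ⟨x, hxZ, hx_returns⟩ :=
    (hf.frequently_ae_mem_and_frequently_image_mem hZ.nullMeasurableSet hZ_pos).exists
  have hx_leaves : ∀ᶠ n in atTop, orbitSum f α (f^[n] x) < ε :=
    (tendsto_orbitSum_iterate_zero hxZ.2.ne).eventually_lt_const hε
  obtain ⟨n, hn_mem, hn_small⟩ := (hx_returns.and_eventually hx_leaves).exists
  exact hn_mem.1.not_gt hn_small

theorem measure_setOf_pos_and_eq_zero [MeasurableSpace X] {μ : Measure X} {g : X → ℝ≥0∞}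
    {p : X → Prop} (h : ∀ ε : ℝ≥0∞, 0 < ε → μ {x | ε < g x ∧ p x} = 0) : μ {x | 0 < g x ∧ p x} = 0 := by
  have hcover : {x | 0 < g x ∧ p x} ⊆ ⋃ n : ℕ, {x | (n : ℝ≥0∞)⁻¹ < g x ∧ p x} := by
    intro x hx
    obtain ⟨n, hn⟩ := ENNReal.exists_inv_nat_lt hx.1.ne'
    exact Set.mem_iUnion.2 ⟨n, hn, hx.2⟩
  exact measure_mono_null hcover <| measure_iUnion_null fun n =>
    h _ (ENNReal.inv_pos.2 (ENNReal.natCast_ne_top n))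

end OrbitSum

theorem stmt16_general {X : Type*} [MeasurableSpace X] (σm : Measure X) [IsFiniteMeasure σm]
    (Ψ : X → X) (hmp : MeasurePreserving Ψ σm σm)
    (α : X → ℝ≥0∞) (hα : Measurable α) :
    (∀ ε : ℝ≥0∞, 0 < ε →
      σm {x | ε < ∑' k : ℕ, α (Ψ^[k] x) ∧ ∑' k : ℕ, α (Ψ^[k] x) < ⊤} = 0) ∧
    σm {x | 0 < ∑' k : ℕ, α (Ψ^[k] x) ∧ ∑' k : ℕ, α (Ψ^[k] x) < ⊤} = 0 := by
  have hZ_null : ∀ ε : ℝ≥0∞, 0 < ε →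
      σm {x | ε < ∑' k : ℕ, α (Ψ^[k] x) ∧ ∑' k : ℕ, α (Ψ^[k] x) < ⊤} = 0 := fun _ hε =>
    hmp.conservative.measure_orbitSum_gt_lt_top_eq_zero hmp.measurable hα hε
  exact ⟨hZ_null, measure_setOf_pos_and_eq_zero hZ_null⟩

/-- Poincaré-recurrence argument: for a measure-preserving map `Ψ` of a
finite measure space and a measurable `α : X → [0,∞]`, for every `ε > 0` the set where
`ε < Σ_k α(Ψ^k x) < ∞` is null; consequently the set where `0 < Σ_k α(Ψ^k x) < ∞` is null. -/
theorem stmt16 {X : Type*} [MeasurableSpace X] (σm : Measure X) [IsFiniteMeasure σm]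
    (Ψ : X → X) (hΨ : Measurable Ψ) (hmp : MeasurePreserving Ψ σm σm)
    (α : X → ℝ≥0∞) (hα : Measurable α) :
    (∀ ε : ℝ≥0∞, 0 < ε →
      σm {x | ε < ∑' k : ℕ, α (Ψ^[k] x) ∧ ∑' k : ℕ, α (Ψ^[k] x) < ⊤} = 0) ∧
    σm {x | 0 < ∑' k : ℕ, α (Ψ^[k] x) ∧ ∑' k : ℕ, α (Ψ^[k] x) < ⊤} = 0 :=
  stmt16_general σm Ψ hmp α hα
end
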